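/- Let the interference graph be complete on n links and let ρ ∈ (0,1). For the complete graph, Λ = {ν ≥ 0 : Σ_{j=1}^n ν_j ≤ 1}. For any ν ∈ ρΛ (so Σ_j ν_j ≤ ρ), there exist fugacities λ_1,…,λ_n > 0 such that the stationary service rates satisfy s_i(λ) = λ_i/(1+Σ_j λ_j) = ν_i + (1−ρ)/(2n) > ν_i for every i, and λ_max := max_i λ_i ≤ (1+ρ)/(1−ρ); consequently the complete-graph parallel Glauber dynamics with these fugacities (decision schedule {i} with probability c_n/n, c_n = (1−1/n)^{n−1}, empty otherwise) has mixing time T_mix ≤ 2n/(c_min(1−ρ)) = O(n), where c_min = 0.2. -/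

import Mathlib

/-! The fugacities `λ_i = s_i / (1 - Σ_j s_j)` invert `λ ↦ λ_i / (1 + Σ_j λ_j)`, so every rate
vector `s` with `Σ s < 1` is realized. For `s_i = ν_i + (1-ρ)/(2n)` we have `Σ s ≤ (1+ρ)/2`,
hence `λ_i ≤ (1+ρ)/(1-ρ)` and `1/(1+λ_i) ≥ (1-ρ)/2`. Every row of the transition matrix then
puts mass at least `β = c_n (1-ρ)/(2n)` on the empty schedule, and Doeblin's coupling bound
gives `‖μ_t - π‖_TV ≤ (1-β)^t ≤ e^{-βt}`. As `c_n ≥ 1/e`, `t = ⌊10n/(1-ρ)⌋` already has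
`βt ≥ 1`. -/

open Finset

/-- Distribution at time `t` of a Markov chain with transition matrix `P`
started at state `x`. -/
noncomputable def chainDist {S : Type*} [Fintype S] [DecidableEq S]
    (P : S → S → ℝ) (x : S) : ℕ → S → ℝ
  | 0 => fun s => if s = x then 1 else 0
  | t + 1 => fun s => ∑ s' : S, chainDist P x t s' * P s' s

/-- Total variation distance between two distributions on a finite set. -/
noncomputable def tvDist {S : Type*} [Fintype S] (μ ν : S → ℝ) : ℝ :=
  (1 / 2) * ∑ s : S, |μ s - ν s|

/-- Mixing time: the maximum over starting states in `states` of the first time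
the distribution is within `1/e` of `π` in total variation. -/
noncomputable def mixTime {S : Type*} [Fintype S] [DecidableEq S]
    (P : S → S → ℝ) (π : S → ℝ) (states : Finset S) : ℕ :=
  states.sup fun x => sInf {t : ℕ | tvDist (chainDist P x t) π ≤ 1 / Real.exp 1}

/-- `c_n = (1 - 1/n)^(n-1)`: the probability that a given link is alone in the
decision schedule when every link sends an INTENT message with probability `1/n`. -/
noncomputable def cSel (n : ℕ) : ℝ := (1 - 1 / (n : ℝ)) ^ (n - 1)

/-- The transition matrix of the parallel Glauber dynamics on a complete
interference graph with `n` links: the state `none` means no link is active and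
`some i` means only link `i` is active; each singleton decision schedule `{i}`
is chosen with probability `c_n/n` and the empty decision schedule otherwise. -/
noncomputable def completeP (n : ℕ) (lam : Fin n → ℝ) :
    Option (Fin n) → Option (Fin n) → ℝ
  | none, none => 1 - cSel n + (cSel n / n) * ∑ i : Fin n, 1 / (1 + lam i)
  | none, some i => (cSel n / n) * (lam i / (1 + lam i))
  | some i, none => (cSel n / n) * (1 / (1 + lam i))
  | some i, some j => if i = j then 1 - (cSel n / n) * (1 / (1 + lam i)) else 0

/-- The stationary distribution of the complete-graph dynamics:
`π(i) = λ_i/Z`, `π(0) = 1/Z`, `Z = 1 + Σ_j λ_j`. -/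
noncomputable def completePi (n : ℕ) (lam : Fin n → ℝ) : Option (Fin n) → ℝ
  | none => 1 / (1 + ∑ j : Fin n, lam j)
  | some i => lam i / (1 + ∑ j : Fin n, lam j)

section Minorization

variable {S : Type*} [Fintype S] {P : S → S → ℝ} {π : S → ℝ} {z : S} {β : ℝ}

theorem sum_abs_sum_mul_le (Q : S → S → ℝ) (hQ : ∀ x y, 0 ≤ Q x y) (d : S → ℝ) :
    ∑ y, |∑ x, d x * Q x y| ≤ ∑ x, |d x| * ∑ y, Q x y := by
  calc ∑ y, |∑ x, d x * Q x y| ≤ ∑ y, ∑ x, |d x| * Q x y := by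
        gcongr with y
        refine (Finset.abs_sum_le_sum_abs _ _).trans_eq ?_
        simp_rw [abs_mul, abs_of_nonneg (hQ _ y)]
    _ = ∑ x, |d x| * ∑ y, Q x y := by
        rw [Finset.sum_comm]
        simp_rw [Finset.mul_sum]

theorem le_one_of_minorization (hP : ∀ x y, 0 ≤ P x y) (hrow : ∀ x, ∑ y, P x y = 1)
    (hβ : ∀ x, β ≤ P x z) : β ≤ 1 :=
  (hβ z).trans ((Finset.single_le_sum (fun y _ => hP z y) (Finset.mem_univ z)).trans_eq (hrow z))

variable [DecidableEq S]

theorem sum_chainDist (hrow : ∀ x, ∑ y, P x y = 1) (x : S) :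
    ∀ t, ∑ s, chainDist P x t s = 1
  | 0 => by simp [chainDist]
  | t + 1 => by
    simp only [chainDist]
    rw [Finset.sum_comm]
    simp_rw [← Finset.mul_sum, hrow, mul_one]
    exact sum_chainDist hrow x t

theorem sum_abs_sub_le_of_minorization (hP : ∀ x y, 0 ≤ P x y) (hrow : ∀ x, ∑ y, P x y = 1)
    (hβ : ∀ x, β ≤ P x z) {μ : S → ℝ} (hμ : ∑ x, μ x = ∑ x, π x) :
    ∑ y, |∑ x, μ x * P x y - ∑ x, π x * P x y| ≤ (1 - β) * ∑ x, |μ x - π x| := by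
  set Q : S → S → ℝ := fun x y => P x y - if y = z then β else 0
  have hQ : ∀ x y, 0 ≤ Q x y := by
    intro x y
    by_cases hy : y = z
    · simpa [Q, hy] using hβ x
    · simpa [Q, hy] using hP x y
  have hQrow : ∀ x, ∑ y, Q x y = 1 - β := by
    intro x
    simp [Q, Finset.sum_sub_distrib, hrow]
  -- The removed mass `β` at `z` is the same for both vectors, so it cancels.
  have hPQ : ∀ y, ∑ x, μ x * P x y - ∑ x, π x * P x y = ∑ x, (μ x - π x) * Q x y := by
    intro y
    simp only [Q, mul_sub, sub_mul, Finset.sum_sub_distrib, ← Finset.sum_mul, hμ]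
    ring
  calc ∑ y, |∑ x, μ x * P x y - ∑ x, π x * P x y|
      = ∑ y, |∑ x, (μ x - π x) * Q x y| := by simp_rw [hPQ]
    _ ≤ ∑ x, |μ x - π x| * ∑ y, Q x y := sum_abs_sum_mul_le Q hQ _
    _ = (1 - β) * ∑ x, |μ x - π x| := by simp_rw [hQrow, ← Finset.sum_mul, mul_comm]

theorem tvDist_pointMass_le_one (hπ : ∀ x, 0 ≤ π x) (hπ1 : ∑ x, π x = 1) (x : S) :
    tvDist (fun s => if s = x then 1 else 0) π ≤ 1 := by
  have h : ∀ s, |(if s = x then (1 : ℝ) else 0) - π s| ≤ (if s = x then 1 else 0) + π s := by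
    intro s
    refine abs_sub_le_iff.mpr ⟨?_, ?_⟩ <;> split_ifs <;> linarith [hπ s]
  have := Finset.sum_le_sum fun s (_ : s ∈ Finset.univ) => h s
  rw [Finset.sum_add_distrib, hπ1] at this
  simp only [Finset.sum_ite_eq', Finset.mem_univ, if_true] at this
  rw [tvDist]
  linarith

theorem tvDist_chainDist_le_of_minorization (hP : ∀ x y, 0 ≤ P x y)
    (hrow : ∀ x, ∑ y, P x y = 1) (hβ : ∀ x, β ≤ P x z) (hπ : ∀ x, 0 ≤ π x)
    (hπ1 : ∑ x, π x = 1) (hstat : ∀ y, ∑ x, π x * P x y = π y) (x : S) :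
    ∀ t, tvDist (chainDist P x t) π ≤ (1 - β) ^ t
  | 0 => by simpa [chainDist] using tvDist_pointMass_le_one hπ hπ1 x
  | t + 1 => by
    have hβ1 := le_one_of_minorization hP hrow hβ
    have ih := tvDist_chainDist_le_of_minorization hP hrow hβ hπ hπ1 hstat x t
    have hstep := sum_abs_sub_le_of_minorization hP hrow hβ
      (μ := chainDist P x t) ((sum_chainDist hrow x t).trans hπ1.symm)
    simp only [tvDist, chainDist] at ih ⊢
    simp_rw [hstat] at hstep
    calc 1 / 2 * ∑ s, |∑ s', chainDist P x t s' * P s' s - π s|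
        ≤ 1 / 2 * ((1 - β) * ∑ s, |chainDist P x t s - π s|) := by gcongr
      _ ≤ (1 - β) * (1 - β) ^ t := by nlinarith
      _ = (1 - β) ^ (t + 1) := by ring

theorem mixTime_le_of_minorization (hP : ∀ x y, 0 ≤ P x y)
    (hrow : ∀ x, ∑ y, P x y = 1) (hβ : ∀ x, β ≤ P x z) (hπ : ∀ x, 0 ≤ π x)
    (hπ1 : ∑ x, π x = 1) (hstat : ∀ y, ∑ x, π x * P x y = π y) (states : Finset S) {t : ℕ}
    (ht : 1 ≤ β * t) : mixTime P π states ≤ t := by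
  refine Finset.sup_le fun x _ => Nat.sInf_le ?_
  have hβ1 := le_one_of_minorization hP hrow hβ
  calc tvDist (chainDist P x t) π ≤ (1 - β) ^ t :=
        tvDist_chainDist_le_of_minorization hP hrow hβ hπ hπ1 hstat x t
    _ ≤ Real.exp (-β) ^ t := by
        gcongr
        linarith [Real.add_one_le_exp (-β)]
    _ = Real.exp (-(β * t)) := by rw [← Real.exp_nat_mul]; ring_nf
    _ ≤ Real.exp (-1) := by gcongr
    _ = 1 / Real.exp 1 := by rw [Real.exp_neg, one_div]

end Minorization

theorem cSel_le_one (n : ℕ) : cSel n ≤ 1 :=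
  pow_le_one₀ (Nat.one_sub_one_div_cast_nonneg n) (Nat.one_sub_one_div_cast_le_one n)

theorem exp_neg_one_le_cSel (n : ℕ) : Real.exp (-1) ≤ cSel n := by
  rcases n with _ | _ | m
  · simp [cSel]
  · simp [cSel]
  · have h : cSel (m + 2) = ((1 + ((m + 1 : ℕ) : ℝ)⁻¹) ^ (m + 1))⁻¹ := by
      simp only [cSel, ← inv_pow]
      congr 1
      push_cast
      field_simp
      ring
    rw [h, Real.exp_neg]
    exact inv_anti₀ (by positivity) Real.one_add_inv_pow_le_exp

theorem cSel_pos (n : ℕ) : 0 < cSel n := (Real.exp_pos _).trans_le (exp_neg_one_le_cSel n)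

section CompleteGraph

variable {n : ℕ} {lam : Fin n → ℝ}

theorem completeP_nonneg (hlam : ∀ i, 0 ≤ lam i) : ∀ x y, 0 ≤ completeP n lam x y
  | none, none => by
    have hsum : 0 ≤ ∑ i, 1 / (1 + lam i) :=
      Finset.sum_nonneg fun i _ => by have := hlam i; positivity
    have := cSel_le_one n
    have := cSel_pos n
    simp only [completeP]
    positivity
  | none, some i => by have := cSel_pos n; have := hlam i; simp only [completeP]; positivity
  | some i, none => by have := cSel_pos n; have := hlam i; simp only [completeP]; positivity
  | some i, some j => by
    simp only [completeP]
    split_ifs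
    · have hn : (1 : ℝ) ≤ n := by exact_mod_cast i.pos
      have hc : cSel n / n ≤ 1 := (div_le_self (cSel_pos n).le hn).trans (cSel_le_one n)
      have hle : 1 / (1 + lam i) ≤ 1 := by rw [div_le_one] <;> linarith [hlam i]
      have := hlam i
      linarith [mul_le_one₀ hc (by positivity) hle]
    · rfl

theorem sum_one_div_add_sum_div (hlam : ∀ i, 0 ≤ lam i) :
    ∑ i, 1 / (1 + lam i) + ∑ i, lam i / (1 + lam i) = n := by
  rw [← Finset.sum_add_distrib]
  have h : ∀ i, 1 / (1 + lam i) + lam i / (1 + lam i) = 1 := fun i => by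
    have := hlam i
    field_simp
  simp only [h, Finset.sum_const, Finset.card_univ, Fintype.card_fin, nsmul_eq_mul, mul_one]

theorem sum_completeP (hn : 0 < n) (hlam : ∀ i, 0 ≤ lam i) :
    ∀ x, ∑ y, completeP n lam x y = 1
  | none => by
    have hc : cSel n / n * n = cSel n := div_mul_cancel₀ _ (by exact_mod_cast hn.ne')
    simp only [Fintype.sum_option, completeP, ← Finset.mul_sum]
    linear_combination cSel n / n * sum_one_div_add_sum_div hlam + hc
  | some i => by simp [Fintype.sum_option, completeP]

theorem sum_completePi (hlam : ∀ i, 0 ≤ lam i) : ∑ x, completePi n lam x = 1 := by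
  have : 0 ≤ ∑ j, lam j := Finset.sum_nonneg fun j _ => hlam j
  have : 0 < 1 + ∑ j, lam j := by linarith
  simp only [Fintype.sum_option, completePi, ← Finset.sum_div]
  field_simp

theorem completePi_nonneg (hlam : ∀ i, 0 ≤ lam i) : ∀ x, 0 ≤ completePi n lam x := by
  have : 0 ≤ ∑ j, lam j := Finset.sum_nonneg fun j _ => hlam j
  rintro (_ | i) <;> simp only [completePi]
  · positivity
  · have := hlam i; positivity

theorem sum_completePi_mul_completeP (hn : 0 < n) (hlam : ∀ i, 0 ≤ lam i) :
    ∀ y, ∑ x, completePi n lam x * completeP n lam x y = completePi n lam y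
  | none => by
    have hc : cSel n / n * n = cSel n := div_mul_cancel₀ _ (by exact_mod_cast hn.ne')
    simp only [Fintype.sum_option, completePi, completeP]
    set Z := 1 + ∑ j, lam j
    have hterm : ∀ i, lam i / Z * (cSel n / n * (1 / (1 + lam i)))
        = cSel n / n * (1 / Z) * (lam i / (1 + lam i)) := fun i => by ring
    rw [Finset.sum_congr rfl fun i _ => hterm i, ← Finset.mul_sum]
    linear_combination 1 / Z * (cSel n / n * sum_one_div_add_sum_div hlam + hc)
  | some j => by
    simp only [Fintype.sum_option, completePi, completeP, mul_ite, mul_zero,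
      Finset.sum_ite_eq', Finset.mem_univ, if_true]
    ring

theorem mul_le_completeP_none (hn : 0 < n) (hlam : ∀ i, 0 ≤ lam i) {δ : ℝ}
    (hδ : ∀ i, δ ≤ 1 / (1 + lam i)) : ∀ x, cSel n / n * δ ≤ completeP n lam x none
  | none => by
    have hc := cSel_le_one n
    have hcn : 0 ≤ cSel n / n := by have := cSel_pos n; positivity
    have hδsum : δ ≤ ∑ i, 1 / (1 + lam i) :=
      (hδ ⟨0, hn⟩).trans (Finset.single_le_sum
        (f := fun i => 1 / (1 + lam i)) (fun i _ => by have := hlam i; positivity)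
        (Finset.mem_univ _))
    simp only [completeP]
    nlinarith [mul_le_mul_of_nonneg_left hδsum hcn]
  | some i => mul_le_mul_of_nonneg_left (hδ i) (by have := cSel_pos n; positivity)

theorem mixTime_completeP_le (hn : 0 < n) (hlam : ∀ i, 0 ≤ lam i) {δ : ℝ} (hδ0 : 0 < δ)
    (hδ : ∀ i, δ ≤ 1 / (1 + lam i)) :
    (mixTime (completeP n lam) (completePi n lam) Finset.univ : ℝ) ≤ 5 * n / δ := by
  have hn' : (1 : ℝ) ≤ n := by exact_mod_cast hn
  have hδ1 : δ ≤ 1 := (hδ ⟨0, hn⟩).trans (by rw [div_le_one] <;> linarith [hlam ⟨0, hn⟩])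
  set β := cSel n / n * δ
  have hβ : β ≤ cSel n := by
    calc β ≤ cSel n / n * 1 := mul_le_mul_of_nonneg_left hδ1 (by have := cSel_pos n; positivity)
      _ ≤ cSel n := by rw [mul_one]; exact div_le_self (cSel_pos n).le hn'
  have hβB : β * (5 * n / δ) = 5 * cSel n := by
    simp only [β]
    field_simp
  -- `c_n ≥ 1/e > 1/4` leaves room for the rounding `⌊5n/δ⌋ ≥ 5n/δ - 1`.
  have hβT : 1 ≤ β * ⌊5 * n / δ⌋₊ := by
    have hfloor := (Nat.lt_floor_add_one (5 * n / δ)).le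
    have he : 1 ≤ 4 * Real.exp (-1) := by
      rw [Real.exp_neg, ← div_eq_mul_inv, le_div_iff₀ (Real.exp_pos 1)]
      linarith [Real.exp_one_lt_d9]
    nlinarith [exp_neg_one_le_cSel n, mul_le_mul_of_nonneg_left hfloor
      (show 0 ≤ β by have := cSel_pos n; positivity)]
  have hmix := mixTime_le_of_minorization (completeP_nonneg hlam) (sum_completeP hn hlam)
    (mul_le_completeP_none hn hlam hδ) (completePi_nonneg hlam) (sum_completePi hlam)
    (sum_completePi_mul_completeP hn hlam) Finset.univ hβT
  exact (Nat.cast_le.mpr hmix).trans (Nat.floor_le (by positivity))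

end CompleteGraph

section Fugacity

variable {ι : Type*} [Fintype ι] {s : ι → ℝ} {b : ℝ}

noncomputable def fugacityOfRates (s : ι → ℝ) (i : ι) : ℝ := s i / (1 - ∑ j, s j)

theorem fugacityOfRates_div_one_add_sum (hs : ∑ j, s j ≠ 1) (i : ι) :
    fugacityOfRates s i / (1 + ∑ j, fugacityOfRates s j) = s i := by
  have hs' : 1 - ∑ j, s j ≠ 0 := sub_ne_zero.mpr hs.symm
  simp only [fugacityOfRates, ← Finset.sum_div]
  field_simp
  ring

theorem fugacityOfRates_le (hs0 : ∀ i, 0 ≤ s i) (hsb : ∑ j, s j ≤ b) (hb : b < 1) (i : ι) :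
    fugacityOfRates s i ≤ b / (1 - b) := by
  have hsi : s i ≤ ∑ j, s j := Finset.single_le_sum (fun j _ => hs0 j) (Finset.mem_univ i)
  exact div_le_div₀ (by linarith [hs0 i]) (hsi.trans hsb) (by linarith) (by linarith)

theorem one_sub_le_one_div_one_add_fugacityOfRates (hs0 : ∀ i, 0 ≤ s i) (hsb : ∑ j, s j ≤ b)
    (hb : b < 1) (i : ι) : 1 - b ≤ 1 / (1 + fugacityOfRates s i) := by
  have hb' : 0 < 1 - b := by linarith
  have hfug : 0 ≤ fugacityOfRates s i := div_nonneg (hs0 i) (by linarith)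
  calc 1 - b = 1 / (1 + b / (1 - b)) := by field_simp; ring
    _ ≤ 1 / (1 + fugacityOfRates s i) := by
      gcongr
      exact fugacityOfRates_le hs0 hsb hb i

end Fugacity

theorem complete_graph_linear_mixing_general
    (n : ℕ) (hn : 0 < n)
    (ρ : ℝ) (hρ1 : ρ < 1)
    (ν : Fin n → ℝ) (hν0 : ∀ i, 0 ≤ ν i) (hνsum : ∑ j : Fin n, ν j ≤ ρ) :
    ∃ lam : Fin n → ℝ, (∀ i, 0 < lam i) ∧
      (∀ i, lam i / (1 + ∑ j : Fin n, lam j) = ν i + (1 - ρ) / (2 * n)) ∧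
      (∀ i, ν i < lam i / (1 + ∑ j : Fin n, lam j)) ∧
      (∀ i, lam i ≤ (1 + ρ) / (1 - ρ)) ∧
      ((mixTime (completeP n lam) (completePi n lam) Finset.univ : ℝ) ≤
        2 * n / (0.2 * (1 - ρ))) := by
  have hn' : (0 : ℝ) < n := by exact_mod_cast hn
  have hε : 0 < (1 - ρ) / (2 * n) := by have := sub_pos.mpr hρ1; positivity
  set s : Fin n → ℝ := fun i => ν i + (1 - ρ) / (2 * n)
  have hs0 : ∀ i, 0 ≤ s i := fun i => by linarith [hν0 i]
  have hsum : ∑ j, s j ≤ (1 + ρ) / 2 := by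
    have : ∑ j, s j = ∑ j, ν j + (1 - ρ) / 2 := by
      simp only [s, Finset.sum_add_distrib, Finset.sum_const, Finset.card_univ, Fintype.card_fin,
        nsmul_eq_mul]
      field_simp
    linarith
  have hb : (1 + ρ) / 2 < 1 := by linarith
  set lam := fugacityOfRates s
  have hrate : ∀ i, lam i / (1 + ∑ j, lam j) = s i :=
    fugacityOfRates_div_one_add_sum (by linarith)
  have hδ : ∀ i, (1 - ρ) / 2 ≤ 1 / (1 + lam i) := fun i => by
    convert one_sub_le_one_div_one_add_fugacityOfRates hs0 hsum hb i using 1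
    ring
  refine ⟨lam, fun i => div_pos (by linarith [hν0 i]) (by linarith), hrate,
    fun i => by rw [hrate]; linarith, fun i => ?_, ?_⟩
  · calc lam i ≤ (1 + ρ) / 2 / (1 - (1 + ρ) / 2) := fugacityOfRates_le hs0 hsum hb i
      _ = (1 + ρ) / (1 - ρ) := by field_simp; ring
  · calc _ ≤ 5 * n / ((1 - ρ) / 2) := mixTime_completeP_le hn
          (fun i => div_nonneg (hs0 i) (by linarith)) (by linarith) hδ
      _ = 2 * n / (0.2 * (1 - ρ)) := by field_simp; norm_num

/-- Theorem 8 of the paper: on the complete interference graph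
with `n ≥ 1` links, for any `ρ ∈ (0,1)` and any `ν ∈ ρΛ` (i.e. `ν ≥ 0` and
`Σ_j ν_j ≤ ρ`), there exist fugacities `λ > 0` whose stationary service rates
equal `ν_i + (1-ρ)/(2n) > ν_i`, with `λ_max ≤ (1+ρ)/(1-ρ)`, and the resulting
chain satisfies `T_mix ≤ 2n/(c_min(1-ρ)) = O(n)` with `c_min = 0.2`. -/
theorem complete_graph_linear_mixing
    (n : ℕ) (hn : 0 < n)
    (ρ : ℝ) (hρ0 : 0 < ρ) (hρ1 : ρ < 1)
    (ν : Fin n → ℝ) (hν0 : ∀ i, 0 ≤ ν i) (hνsum : ∑ j : Fin n, ν j ≤ ρ) :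
    ∃ lam : Fin n → ℝ, (∀ i, 0 < lam i) ∧
      (∀ i, lam i / (1 + ∑ j : Fin n, lam j) = ν i + (1 - ρ) / (2 * n)) ∧
      (∀ i, ν i < lam i / (1 + ∑ j : Fin n, lam j)) ∧
      (∀ i, lam i ≤ (1 + ρ) / (1 - ρ)) ∧
      ((mixTime (completeP n lam) (completePi n lam) Finset.univ : ℝ) ≤
        2 * n / (0.2 * (1 - ρ))) :=
  complete_graph_linear_mixing_general n hn ρ hρ1 ν hν0 hνsum
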